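/- arXiv:1905.04177 — 2 statements merged into one kernel-verified Lean document; each statement's English description precedes it below -/
import Mathlib

section
/- Let τ = (1+√5)/2, let s ∈ ℤ[τ] be nonzero, and let κ = m + nτ with (m,n) ≠ (0,0). Define I(ℓ) = sinc(π τ^ℓ s κ*/√5)², where sinc(x) = sin(x)/x and κ* is the algebraic conjugate. Then τ^{4ℓ} · I(ℓ) = τ^{4ℓ} · sinc(π τ^ℓ s κ*/√5)² converges to a positive finite limit as ℓ → ∞. -/
noncomputable def sinc (x : ℝ) : ℝ := if x = 0 then 1 else Real.sin x / x

lemma sinc_tendsto_zero : Filter.Tendsto sinc (nhds 0) (nhds 1) := by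
  have h := Real.hasDerivAt_sin 0
  rw [hasDerivAt_iff_tendsto_slope] at h
  rw [Real.cos_zero] at h
  have h1 : Filter.Tendsto sinc (nhdsWithin 0 {0}ᶜ) (nhds 1) := by
    refine h.congr' ?_
    filter_upwards [self_mem_nhdsWithin] with x hx
    simp only [Set.mem_compl_iff, Set.mem_singleton_iff] at hx
    simp [slope, sinc, hx, Real.sin_zero, div_eq_inv_mul]
  rw [← nhdsNE_sup_pure 0]
  refine Filter.Tendsto.sup h1 ?_
  have h0 : sinc 0 = 1 := by simp [sinc]
  simpa [h0] using tendsto_pure_nhds sinc 0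

lemma int_comb_sqrt5 (c d : ℤ) (h : (c : ℝ) + (d : ℝ) * Real.sqrt 5 = 0) :
    c = 0 ∧ d = 0 := by
  have hirr : Irrational (Real.sqrt 5) := by
    simpa using Nat.Prime.irrational_sqrt (by norm_num : Nat.Prime 5)
  by_cases hd : d = 0
  · subst hd
    simp at h
    exact ⟨by exact_mod_cast h, rfl⟩
  · exfalso
    have hd' : (d : ℝ) ≠ 0 := Int.cast_ne_zero.mpr hd
    have : Real.sqrt 5 = ((-c / d : ℚ) : ℝ) := by
      push_cast
      field_simp at h ⊢
      linarith
    exact (Rat.not_irrational _) (this ▸ hirr)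

theorem sinc_sq_inflation_decay (τ : ℝ) (hτ : τ = (1 + Real.sqrt 5) / 2)
    (a b m n : ℤ) (hmn : ¬ (m = 0 ∧ n = 0))
    (s κs : ℝ) (hs : s = (a : ℝ) + (b : ℝ) * τ) (hs0 : s ≠ 0)
    (hκs : κs = (m : ℝ) + (n : ℝ) - (n : ℝ) * τ) (hsκ : s * κs ≠ 0) :
    ∃ L : ℝ, 0 < L ∧
      Filter.Tendsto
        (fun ℓ : ℕ => τ ^ (4 * ℓ) * (sinc (Real.pi * τ ^ ℓ * s * κs / Real.sqrt 5)) ^ 2)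
        Filter.atTop (nhds L) := by
  have h5 : Real.sqrt 5 ^ 2 = 5 := Real.sq_sqrt (by norm_num)
  have h5pos : (0:ℝ) < Real.sqrt 5 := Real.sqrt_pos.mpr (by norm_num)
  have h5lt : Real.sqrt 5 < 3 := by nlinarith
  have h5gt : 2 < Real.sqrt 5 := by nlinarith
  obtain ⟨σ, hσ⟩ : ∃ x : ℝ, x = 1 - τ := ⟨_, rfl⟩
  have hτsq : τ ^ 2 = τ + 1 := by rw [hτ]; nlinarith
  have hσsq : σ ^ 2 = σ + 1 := by rw [hσ, hτ]; nlinarith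
  have hτσ : τ * σ = -1 := by rw [hσ]; nlinarith
  have hτpos : 1 < τ := by rw [hτ]; nlinarith
  have hτne : τ ≠ 0 := by intro h; rw [h] at hτpos; norm_num at hτpos
  have hσabs : |σ| < 1 := by
    rw [abs_lt]; constructor <;> [rw [hσ, hτ]; rw [hσ]] <;> nlinarith
  have hσne : σ ≠ 0 := by
    intro h; rw [h] at hτσ; simp at hτσ
  have hτmσ : τ - σ = Real.sqrt 5 := by rw [hσ, hτ]; ring
  obtain ⟨s', hs'⟩ : ∃ x : ℝ, x = (a : ℝ) + (b : ℝ) * σ := ⟨_, rfl⟩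
  obtain ⟨κ, hκ⟩ : ∃ x : ℝ, x = (m : ℝ) + (n : ℝ) * τ := ⟨_, rfl⟩
  have hcomb : ∀ (c d : ℤ) (t : ℝ), (t = τ ∨ t = σ) → (c : ℝ) + (d : ℝ) * t = 0 →
      c = 0 ∧ d = 0 := by
    intro c d t ht h
    rcases ht with ht | ht
    · have h2 : ((2 * c + d : ℤ) : ℝ) + ((d : ℤ) : ℝ) * Real.sqrt 5 = 0 := by
        push_cast; rw [ht, hτ] at h; linarith
      have := int_comb_sqrt5 _ _ h2
      omega
    · have h2 : ((2 * c + d : ℤ) : ℝ) + ((-d : ℤ) : ℝ) * Real.sqrt 5 = 0 := by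
        push_cast; rw [ht, hσ, hτ] at h; linarith
      have := int_comb_sqrt5 _ _ h2
      omega
  have hs'0 : s' ≠ 0 := by
    intro h
    have hab := hcomb a b σ (Or.inr rfl) (by rw [← hs']; exact h)
    apply hs0
    rw [hs, hab.1, hab.2]; simp
  have hκ0 : κ ≠ 0 := by
    intro h
    exact hmn (hcomb m n τ (Or.inl rfl) (by rw [← hκ]; exact h))
  have hκs0 : κs ≠ 0 := by
    intro h; exact hsκ (by rw [h, mul_zero])
  have key : ∀ ℓ : ℕ, ∃ p q : ℤ,
      τ ^ ℓ * s * κs = (p : ℝ) + (q : ℝ) * τ ∧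
      σ ^ ℓ * s' * κ = (p : ℝ) + (q : ℝ) * σ := by
    intro ℓ
    induction ℓ with
    | zero =>
      refine ⟨a * m - b * n + a * n, b * m - a * n, ?_, ?_⟩
      · rw [hs, hκs]; push_cast
        linear_combination (-(b : ℝ) * n) * hτsq
      · rw [hs', hκ, hσ]; push_cast
        linear_combination (-(b : ℝ) * n) * hτsq
    | succ k ih =>
      obtain ⟨p, q, h1, h2⟩ := ih
      refine ⟨q, p + q, ?_, ?_⟩
      · rw [pow_succ, show τ ^ k * τ * s * κs = τ * (τ ^ k * s * κs) by ring, h1]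
        push_cast
        linear_combination (q : ℝ) * hτsq
      · rw [pow_succ, show σ ^ k * σ * s' * κ = σ * (σ ^ k * s' * κ) by ring, h2]
        push_cast
        linear_combination (q : ℝ) * hσsq
  have hL0 : s' * κ / (s * κs) ≠ 0 := div_ne_zero (mul_ne_zero hs'0 hκ0) hsκ
  refine ⟨(s' * κ / (s * κs)) ^ 2, by positivity, ?_⟩
  have heq : ∀ ℓ : ℕ,
      τ ^ (4 * ℓ) * (sinc (Real.pi * τ ^ ℓ * s * κs / Real.sqrt 5)) ^ 2 =
      (sinc (Real.pi * σ ^ ℓ * s' * κ / Real.sqrt 5)) ^ 2 * (s' * κ / (s * κs)) ^ 2 := by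
    intro ℓ
    obtain ⟨p, q, h1, h2⟩ := key ℓ
    have hz : Real.pi * τ ^ ℓ * s * κs / Real.sqrt 5 ≠ 0 :=
      div_ne_zero (mul_ne_zero (mul_ne_zero (mul_ne_zero Real.pi_ne_zero
        (pow_ne_zero _ hτne)) hs0) hκs0) (ne_of_gt h5pos)
    have hw : Real.pi * σ ^ ℓ * s' * κ / Real.sqrt 5 ≠ 0 :=
      div_ne_zero (mul_ne_zero (mul_ne_zero (mul_ne_zero Real.pi_ne_zero
        (pow_ne_zero _ hσne)) hs'0) hκ0) (ne_of_gt h5pos)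
    rw [sinc, sinc, if_neg hz, if_neg hw]
    have hdiff : Real.pi * τ ^ ℓ * s * κs / Real.sqrt 5 =
        Real.pi * σ ^ ℓ * s' * κ / Real.sqrt 5 + (q : ℝ) * Real.pi := by
      have hd : τ ^ ℓ * s * κs - σ ^ ℓ * s' * κ = (q : ℝ) * Real.sqrt 5 := by
        rw [h1, h2, ← hτmσ]; ring
      have e : Real.pi * τ ^ ℓ * s * κs =
          Real.pi * σ ^ ℓ * s' * κ + ((q : ℝ) * Real.pi) * Real.sqrt 5 := by
        linear_combination Real.pi * hd
      rw [e, add_div, mul_div_cancel_right₀ _ (ne_of_gt h5pos)]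
    have hsin : Real.sin (Real.pi * τ ^ ℓ * s * κs / Real.sqrt 5) ^ 2 =
        Real.sin (Real.pi * σ ^ ℓ * s' * κ / Real.sqrt 5) ^ 2 := by
      rw [hdiff, Real.sin_add_int_mul_pi, mul_pow]
      have hone : ((-1 : ℝ) ^ q) ^ 2 = 1 := by
        rcases Int.even_or_odd q with he | ho
        · rw [he.neg_one_zpow]; norm_num
        · rw [ho.neg_one_zpow]; norm_num
      rw [hone, one_mul]
    have hpow : (τ ^ ℓ * σ ^ ℓ) ^ 2 = 1 := by
      calc (τ ^ ℓ * σ ^ ℓ) ^ 2 = ((τ * σ) ^ ℓ) ^ 2 := by rw [← mul_pow]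
        _ = ((τ * σ) ^ 2) ^ ℓ := by rw [← pow_mul, ← pow_mul, mul_comm ℓ 2]
        _ = 1 := by rw [hτσ]; norm_num
    have hτ4 : τ ^ (4 * ℓ) = (τ ^ ℓ) ^ 4 := by rw [mul_comm 4 ℓ, pow_mul]
    rw [hτ4]
    simp only [div_pow, h5]
    rw [hsin]
    have hA : Real.pi * τ ^ ℓ * s * κs ≠ 0 :=
      mul_ne_zero (mul_ne_zero (mul_ne_zero Real.pi_ne_zero (pow_ne_zero _ hτne)) hs0) hκs0
    have hB : Real.pi * σ ^ ℓ * s' * κ ≠ 0 :=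
      mul_ne_zero (mul_ne_zero (mul_ne_zero Real.pi_ne_zero (pow_ne_zero _ hσne)) hs'0) hκ0
    field_simp
    linear_combination (Real.sin (Real.pi * σ ^ ℓ * s' * κ / Real.sqrt 5) ^ 2) * hpow
  have harg : Filter.Tendsto (fun ℓ : ℕ => Real.pi * σ ^ ℓ * s' * κ / Real.sqrt 5)
      Filter.atTop (nhds 0) := by
    have h0 := tendsto_pow_atTop_nhds_zero_of_abs_lt_one hσabs
    have h1 := ((h0.const_mul Real.pi).mul_const s').mul_const κ |>.div_const (Real.sqrt 5)
    simpa [mul_comm, mul_assoc] using h1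
  have hlim : Filter.Tendsto
      (fun ℓ : ℕ => (sinc (Real.pi * σ ^ ℓ * s' * κ / Real.sqrt 5)) ^ 2)
      Filter.atTop (nhds 1) := by
    have h1 := (sinc_tendsto_zero.comp harg).pow 2
    simpa using h1
  have h2 := hlim.mul_const ((s' * κ / (s * κs)) ^ 2)
  rw [one_mul] at h2
  exact Filter.Tendsto.congr (fun ℓ => (heq ℓ).symm) h2
end

section
/- Let f_n(x) = ∏_{ℓ=0}^{n−1}(1 − cos(2^{ℓ+1}πx)). For N ≥ n, one has F_N(2^{−n}) := ∫₀^{2^{−n}} f_N(x) dx ≤ 2^{−n} f_n(2^{−n}). -/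
/-!
Splitting the product defining `f_N` after `n` factors gives `f_N(x) = f_n(x) f_{N-n}(2^n x)`.
On `[0, 2^{-n}]` every factor of `f_n` is `1 - cos` of an angle in `[0, π]`, so `f_n` is
increasing there and `f_n(x) ≤ f_n(2^{-n})`. What remains is `∫₀^{2^{-n}} f_{N-n}(2^n x) dx`,
which is `2^{-n}` because every `f_m` is `1`-periodic with mean `1`: the factor
`1 - cos(2πx)` flips to `1 + cos(2πx)` under `x ↦ x + 1/2`, so `∫₀¹ f_{m+1} = ∫₀¹ f_m`.
-/

noncomputable def tmRiesz (n : ℕ) (x : ℝ) : ℝ :=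
  ∏ ℓ ∈ Finset.range n, (1 - Real.cos (2 ^ (ℓ + 1) * Real.pi * x))

open Real intervalIntegral

theorem intervalIntegral.integral_zero_two_mul_eq_integral_add_comp_add {φ : ℝ → ℝ}
    (hφ : Continuous φ) (c : ℝ) :
    ∫ x in (0:ℝ)..2 * c, φ x = ∫ x in (0:ℝ)..c, (φ x + φ (x + c)) := by
  have hshift : ∫ x in (0:ℝ)..c, φ (x + c) = ∫ x in c..2 * c, φ x := by
    rw [integral_comp_add_right, zero_add, two_mul]
  rw [integral_add (hφ.intervalIntegrable _ _)
      ((by fun_prop : Continuous fun x => φ (x + c)).intervalIntegrable _ _), hshift,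
    integral_add_adjacent_intervals (hφ.intervalIntegrable _ _) (hφ.intervalIntegrable _ _)]

theorem integral_one_sub_cos_mul_comp_two_mul {g : ℝ → ℝ} (hg : Continuous g)
    (hper : Function.Periodic g 1) :
    ∫ x in (0:ℝ)..1, (1 - cos (2 * π * x)) * g (2 * x) = ∫ x in (0:ℝ)..1, g x := by
  have hcont : Continuous fun x => (1 - cos (2 * π * x)) * g (2 * x) := by fun_prop
  have hflip (x : ℝ) : (1 - cos (2 * π * x)) * g (2 * x)
      + (1 - cos (2 * π * (x + 2⁻¹))) * g (2 * (x + 2⁻¹)) = 2 * g (2 * x) := by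
    rw [show 2 * π * (x + 2⁻¹) = 2 * π * x + π by ring, cos_add_pi,
      show 2 * (x + 2⁻¹) = 2 * x + 1 by ring, hper]
    ring
  calc ∫ x in (0:ℝ)..1, (1 - cos (2 * π * x)) * g (2 * x)
      = ∫ x in (0:ℝ)..2 * 2⁻¹, (1 - cos (2 * π * x)) * g (2 * x) := by norm_num
    _ = ∫ x in (0:ℝ)..2⁻¹, 2 * g (2 * x) := by
        rw [integral_zero_two_mul_eq_integral_add_comp_add hcont]
        simp only [hflip]
    _ = ∫ x in (0:ℝ)..1, g x := by
        rw [integral_const_mul, integral_comp_mul_left g two_ne_zero, mul_zero,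
          mul_inv_cancel₀ two_ne_zero, smul_eq_mul, ← mul_assoc, mul_inv_cancel₀ two_ne_zero,
          one_mul]

@[fun_prop]
theorem continuous_tmRiesz (n : ℕ) : Continuous (tmRiesz n) := by
  unfold tmRiesz
  fun_prop

theorem tmRiesz_nonneg (n : ℕ) (x : ℝ) : 0 ≤ tmRiesz n x :=
  Finset.prod_nonneg fun _ _ => sub_nonneg.mpr (cos_le_one _)

theorem tmRiesz_periodic (n : ℕ) : Function.Periodic (tmRiesz n) 1 := by
  intro x
  refine Finset.prod_congr rfl fun ℓ _ => ?_
  have h : (2:ℝ) ^ (ℓ + 1) * π * (x + 1) = 2 ^ (ℓ + 1) * π * x + (2 ^ ℓ : ℕ) * (2 * π) := by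
    push_cast; ring
  simp only [h, cos_add_nat_mul_two_pi]

theorem tmRiesz_add (n m : ℕ) (x : ℝ) :
    tmRiesz (n + m) x = tmRiesz n x * tmRiesz m (2 ^ n * x) := by
  unfold tmRiesz
  rw [Finset.prod_range_add]
  congr 1
  refine Finset.prod_congr rfl fun ℓ _ => ?_
  ring_nf

theorem tmRiesz_one (x : ℝ) : tmRiesz 1 x = 1 - cos (2 * π * x) := by
  simp [tmRiesz]

theorem integral_tmRiesz_zero_one (n : ℕ) : ∫ x in (0:ℝ)..1, tmRiesz n x = 1 := by
  induction n with
  | zero => simp [tmRiesz]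
  | succ n ih =>
    simp only [add_comm n 1, tmRiesz_add 1 n, tmRiesz_one, pow_one]
    rw [integral_one_sub_cos_mul_comp_two_mul (continuous_tmRiesz n) (tmRiesz_periodic n), ih]

theorem integral_tmRiesz_comp_two_pow_mul (n m : ℕ) :
    ∫ x in (0:ℝ)..2 ^ (-(n : ℤ)), tmRiesz m (2 ^ n * x) = 2 ^ (-(n : ℤ)) := by
  have h : (2:ℝ) ^ n * 2 ^ (-(n : ℤ)) = 1 := by simp
  rw [integral_comp_mul_left (tmRiesz m) (by positivity), mul_zero, h, integral_tmRiesz_zero_one,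
    smul_eq_mul, mul_one, zpow_neg, zpow_natCast]

theorem tmRiesz_monotoneOn (n : ℕ) : MonotoneOn (tmRiesz n) (Set.Icc 0 (2 ^ (-(n : ℤ)))) := by
  rintro x ⟨hx0, -⟩ y ⟨-, hyn⟩ hxy
  refine Finset.prod_le_prod (fun _ _ => sub_nonneg.mpr (cos_le_one _)) fun ℓ hℓ => ?_
  have hy : (2:ℝ) ^ (ℓ + 1) * y ≤ 1 :=
    calc (2:ℝ) ^ (ℓ + 1) * y ≤ 2 ^ (ℓ + 1) * 2 ^ (-((ℓ + 1 : ℕ) : ℤ)) := by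
          gcongr
          exact hyn.trans (zpow_le_zpow_right₀ one_le_two (by simpa using hℓ))
      _ = 1 := by rw [zpow_neg, zpow_natCast, mul_inv_cancel₀ (by positivity)]
  have hpow : (0:ℝ) < 2 ^ (ℓ + 1) := by positivity
  have hmem (z : ℝ) (hz0 : 0 ≤ z) (hz : z ≤ y) : 2 ^ (ℓ + 1) * π * z ∈ Set.Icc 0 π :=
    ⟨by positivity, by nlinarith [pi_pos, mul_le_mul_of_nonneg_left hz hpow.le]⟩
  have := antitoneOn_cos (hmem x hx0 hxy) (hmem y (hx0.trans hxy) le_rfl) (by gcongr)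
  linarith

theorem tmRiesz_upper_bound (n N : ℕ) (hnN : n ≤ N) :
    ∫ x in (0:ℝ)..((2:ℝ) ^ (-(n : ℤ))), tmRiesz N x
      ≤ (2:ℝ) ^ (-(n : ℤ)) * tmRiesz n ((2:ℝ) ^ (-(n : ℤ))) := by
  set a : ℝ := (2:ℝ) ^ (-(n : ℤ))
  have ha : 0 ≤ a := zpow_nonneg zero_le_two _
  obtain ⟨m, rfl⟩ := Nat.exists_eq_add_of_le hnN
  have hf_le (x : ℝ) (hx : x ∈ Set.Icc 0 a) :
      tmRiesz (n + m) x ≤ tmRiesz n a * tmRiesz m (2 ^ n * x) := by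
    rw [tmRiesz_add]
    exact mul_le_mul_of_nonneg_right
      (tmRiesz_monotoneOn n hx ⟨ha, le_rfl⟩ hx.2) (tmRiesz_nonneg _ _)
  calc ∫ x in (0:ℝ)..a, tmRiesz (n + m) x
      ≤ ∫ x in (0:ℝ)..a, tmRiesz n a * tmRiesz m (2 ^ n * x) :=
        integral_mono_on ha ((continuous_tmRiesz _).intervalIntegrable _ _)
          ((by fun_prop : Continuous _).intervalIntegrable _ _) hf_le
    _ = a * tmRiesz n a := by
        rw [integral_const_mul, integral_tmRiesz_comp_two_pow_mul, mul_comm]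
end
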